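/- Let A and B be unital C*-algebras, u a unitary element of B, P a central projection in B, and J : A → B a surjective Jordan *-isomorphism. Then the map T(a) = u·P·J(a) + u·(1_B − P)·J(a)* is a surjective real-linear isometry from A onto B. -/

import Mathlib

/-!
A Jordan homomorphism satisfies `J (a * b * a) = J a * J b * J a`; taking `b = a⁻¹` shows that a
unital one maps units to units, so a Jordan isomorphism preserves spectra. For a Jordan
*-isomorphism of C*-algebras this makes `J` isometric on self-adjoint elements, hence bounded
(by `2`, via real and imaginary parts). The map `y ↦ P * y + (1 - P) * star y` is a bounded
involution. Both maps preserve the triple product `x * star x * x`, whose norm is `‖x‖ ^ 3`, so a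
bound `‖f x‖ ≤ C * ‖x‖` self-improves to `‖f x‖ ^ 3 ^ n ≤ C * ‖x‖ ^ 3 ^ n` for all `n`, i.e. to
`‖f x‖ ≤ ‖x‖`; applied to the map and its inverse this gives isometry. Finally, left
multiplication by a unitary is isometric.
-/

section JordanHom

variable {A B : Type*} [Ring A] [Ring B] {F : Type*} [FunLike F A B] [AddMonoidHomClass F A B]

lemma map_mul_add_mul_of_map_mul_self {J : F} (hJ : ∀ a, J (a * a) = J a * J a) (a b : A) :
    J (a * b + b * a) = J a * J b + J b * J a := by
  have h := hJ (a + b)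
  simp only [add_mul, mul_add, map_add, hJ] at h
  rw [map_add]
  linear_combination (norm := abel) h

lemma map_mul_mul_of_map_mul_self [IsAddTorsionFree B] {J : F}
    (hJ : ∀ a, J (a * a) = J a * J a) (a b : A) : J (a * b * a) = J a * J b * J a := by
  have h := congrArg J (show a * (a * b + b * a) + (a * b + b * a) * a
      = (a * a * b + b * (a * a)) + 2 • (a * b * a) by noncomm_ring)
  simp only [map_mul_add_mul_of_map_mul_self hJ, map_add, map_nsmul, hJ] at h
  refine nsmul_right_injective two_ne_zero ?_
  linear_combination (norm := skip) -h
  noncomm_ring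

lemma map_one_of_map_mul_self [IsAddTorsionFree B] {J : F} (hJ : ∀ a, J (a * a) = J a * J a)
    (hJsurj : Function.Surjective J) : J 1 = 1 := by
  obtain ⟨a, ha⟩ := hJsurj 1
  have h := map_mul_add_mul_of_map_mul_self hJ a 1
  rw [mul_one, one_mul, map_add, ha, mul_one, one_mul] at h
  exact nsmul_right_injective two_ne_zero (by simpa only [two_nsmul] using h.symm)

/-- With `b = a⁻¹`, `J a * J b ^ 2 * J a = J (a * b ^ 2 * a) = 1`, so `J a * J b ^ 2` is a left and
`J b ^ 2 * J a` a right inverse of `J a`. -/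
lemma IsUnit.map_of_map_mul_self [IsAddTorsionFree B] {J : F} (hJ : ∀ a, J (a * a) = J a * J a)
    (hJ1 : J 1 = 1) {a : A} (ha : IsUnit a) : IsUnit (J a) := by
  obtain ⟨⟨a, b, hab, hba⟩, rfl⟩ := ha
  have habba : J a * (J b * J b) * J a = 1 := by
    rw [← hJ, ← map_mul_mul_of_map_mul_self hJ, ← hJ1,
      show a * (b * b) * a = (a * b) * (b * a) by noncomm_ring, hab, hba, one_mul]
  exact isUnit_iff_exists_and_exists.2
    ⟨⟨J b * J b * J a, by rw [← habba]; noncomm_ring⟩,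
      ⟨J a * J b * J b, by rw [← habba]; noncomm_ring⟩⟩

lemma LinearEquiv.symm_map_mul_self {R : Type*} [CommSemiring R] [Module R A] [Module R B]
    (e : A ≃ₗ[R] B) (he : ∀ a, e (a * a) = e a * e a) (b : B) :
    e.symm (b * b) = e.symm b * e.symm b :=
  e.injective (by simp only [he, e.apply_symm_apply])

lemma LinearEquiv.spectrum_map_of_map_mul_self {R : Type*} [CommRing R] [Algebra R A] [Algebra R B]
    [IsAddTorsionFree A] [IsAddTorsionFree B] (e : A ≃ₗ[R] B) (he : ∀ a, e (a * a) = e a * e a)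
    (a : A) : spectrum R (e a) = spectrum R a := by
  have he1 : e 1 = 1 := map_one_of_map_mul_self he e.surjective
  have hsymm1 : e.symm 1 = 1 := by rw [← he1, e.symm_apply_apply]
  have he_sub (r : R) : e (algebraMap R A r - a) = algebraMap R B r - e a := by
    rw [map_sub, Algebra.algebraMap_eq_smul_one, Algebra.algebraMap_eq_smul_one, map_smul, he1]
  ext r
  rw [spectrum.mem_iff, spectrum.mem_iff, not_iff_not, ← he_sub]
  refine ⟨fun h ↦ ?_, IsUnit.map_of_map_mul_self he he1⟩
  simpa using h.map_of_map_mul_self (e.symm_map_mul_self he) hsymm1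

end JordanHom

lemma LinearEquiv.symm_map_star {R A B : Type*} [Semiring R] [AddCommMonoid A] [AddCommMonoid B]
    [Module R A] [Module R B] [Star A] [Star B] (e : A ≃ₗ[R] B)
    (he : ∀ a, e (star a) = star (e a)) (b : B) : e.symm (star b) = star (e.symm b) :=
  e.injective (by rw [he, e.apply_symm_apply, e.apply_symm_apply])

section PartialStar

variable {B : Type*}

def partialStar [Ring B] [Star B] (P y : B) : B := P * y + (1 - P) * star y

variable [Ring B] {P : B}

lemma IsIdempotentElem.mul_add_one_sub_mul_mul (hP : IsIdempotentElem P)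
    (hPc : ∀ b, P * b = b * P) (a b c d : B) :
    (P * a + (1 - P) * b) * (P * c + (1 - P) * d) = P * (a * c) + (1 - P) * (b * d) := by
  have hQc (b : B) : (1 - P) * b = b * (1 - P) := ((Commute.one_left b).sub_left (hPc b)).eq
  have hswap (p x q y : B) (hq : ∀ b, q * b = b * q) : p * x * (q * y) = p * q * (x * y) := by
    rw [mul_assoc p, ← mul_assoc x, ← hq, mul_assoc, mul_assoc]
  rw [add_mul, mul_add, mul_add, hswap _ _ _ _ hPc, hswap _ _ _ _ hPc, hswap _ _ _ _ hQc,
    hswap _ _ _ _ hQc, hP.eq, hP.one_sub.eq, hP.mul_one_sub_self, hP.one_sub_mul_self, zero_mul,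
    zero_mul, add_zero, zero_add]

variable [StarRing B]

lemma star_partialStar (hP : IsSelfAdjoint P) (hPc : ∀ b, P * b = b * P) (y : B) :
    star (partialStar P y) = partialStar P (star y) := by
  rw [partialStar, partialStar, star_add, star_mul, star_mul, star_sub, star_one, hP.star_eq,
    star_star, hPc, ((Commute.one_left y).sub_left (hPc y)).eq]

lemma partialStar_partialStar (hP : IsStarProjection P) (hPc : ∀ b, P * b = b * P) (y : B) :
    partialStar P (partialStar P y) = y := by
  have hP' := hP.isIdempotentElem
  conv_lhs => rw [partialStar, star_partialStar hP.isSelfAdjoint hPc]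
  rw [partialStar, partialStar, star_star, mul_add, mul_add, ← mul_assoc, ← mul_assoc,
    ← mul_assoc, ← mul_assoc, hP'.eq, hP'.one_sub.eq, hP'.mul_one_sub_self,
    hP'.one_sub_mul_self, zero_mul, add_zero, zero_add, ← add_mul, add_sub_cancel,
    one_mul]

lemma partialStar_mul_star_mul_self (hP : IsStarProjection P) (hPc : ∀ b, P * b = b * P) (y : B) :
    partialStar P (y * star y * y)
      = partialStar P y * star (partialStar P y) * partialStar P y := by
  rw [star_partialStar hP.isSelfAdjoint hPc]
  simp only [partialStar, hP.isIdempotentElem.mul_add_one_sub_mul_mul hPc, star_mul, star_star,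
    mul_assoc]

end PartialStar

lemma norm_partialStar_le {B : Type*} [NormedRing B] [StarRing B] [NormedStarGroup B] (P y : B) :
    ‖partialStar P y‖ ≤ (‖P‖ + ‖1 - P‖) * ‖y‖ :=
  calc ‖partialStar P y‖ ≤ ‖P‖ * ‖y‖ + ‖1 - P‖ * ‖star y‖ :=
        (norm_add_le _ _).trans (add_le_add (norm_mul_le _ _) (norm_mul_le _ _))
    _ = (‖P‖ + ‖1 - P‖) * ‖y‖ := by rw [norm_star, add_mul]

lemma le_of_forall_exists_pow_le_mul_pow {x y C : ℝ} (hy : 0 < y)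
    (h : ∀ n : ℕ, ∃ k ≥ n, x ^ k ≤ C * y ^ k) : x ≤ y := by
  by_contra! hxy
  have hr : 1 < x / y := (one_lt_div hy).2 hxy
  obtain ⟨n, hn⟩ := pow_unbounded_of_one_lt C hr
  obtain ⟨k, hk, hxk⟩ := h n
  have : (x / y) ^ k ≤ C := by rwa [div_pow, div_le_iff₀ (by positivity)]
  linarith [pow_le_pow_right₀ hr.le hk]

section CStarAlgebra

variable {A B : Type*} [CStarAlgebra A] [CStarAlgebra B]

lemma IsSelfAdjoint.norm_pow {a : A} (ha : IsSelfAdjoint a) {n : ℕ} (hn : n ≠ 0) :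
    ‖a ^ n‖ = ‖a‖ ^ n := by
  refine le_antisymm (norm_pow_le' a (Nat.pos_of_ne_zero hn)) ?_
  have h := spectrum.spectralRadius_pow_le (𝕜 := ℂ) a n hn
  rw [ha.spectralRadius_eq_nnnorm, (ha.pow n).spectralRadius_eq_nnnorm] at h
  exact_mod_cast h

lemma norm_mul_star_mul_self (x : A) : ‖x * star x * x‖ = ‖x‖ ^ 3 := by
  have h : star (x * star x * x) * (x * star x * x) = (star x * x) ^ 3 := by
    simp only [star_mul, star_star]
    noncomm_ring
  have hsq : ‖x * star x * x‖ ^ 2 = (‖x‖ ^ 3) ^ 2 := by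
    rw [sq, ← CStarRing.norm_star_mul_self, h,
      (IsSelfAdjoint.star_mul_self x).norm_pow three_ne_zero, CStarRing.norm_star_mul_self]
    ring
  exact (pow_left_inj₀ (norm_nonneg _) (by positivity) two_ne_zero).1 hsq

lemma norm_apply_le_of_map_mul_star_mul_self {f : A → B} {C : ℝ} (hC : ∀ x, ‖f x‖ ≤ C * ‖x‖)
    (hf : ∀ x, f (x * star x * x) = f x * star (f x) * f x) (a : A) : ‖f a‖ ≤ ‖a‖ := by
  have hpow (n : ℕ) (x : A) : ‖f x‖ ^ 3 ^ n ≤ C * ‖x‖ ^ 3 ^ n := by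
    induction n generalizing x with
    | zero => simpa using hC x
    | succ n ih =>
      have h := ih (x * star x * x)
      rwa [hf, norm_mul_star_mul_self, norm_mul_star_mul_self, ← pow_mul, ← pow_mul,
        ← pow_succ'] at h
  rcases (norm_nonneg a).eq_or_lt with ha | ha
  · simpa [← ha] using hC a
  · exact le_of_forall_exists_pow_le_mul_pow ha
      fun n ↦ ⟨3 ^ n, (Nat.lt_pow_self (by norm_num)).le, hpow n a⟩

lemma norm_apply_eq_of_map_mul_star_mul_self {f : A → B} {g : B → A}
    (hgf : Function.LeftInverse g f) (hfg : Function.RightInverse g f) {C D : ℝ}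
    (hf : ∀ x, ‖f x‖ ≤ C * ‖x‖) (hg : ∀ y, ‖g y‖ ≤ D * ‖y‖)
    (hf3 : ∀ x, f (x * star x * x) = f x * star (f x) * f x) (a : A) : ‖f a‖ = ‖a‖ := by
  have hg3 (y : B) : g (y * star y * y) = g y * star (g y) * g y := by
    rw [← hgf (g y * star (g y) * g y), hf3, hfg]
  refine le_antisymm (norm_apply_le_of_map_mul_star_mul_self hf hf3 a) ?_
  calc ‖a‖ = ‖g (f a)‖ := by rw [hgf]
    _ ≤ ‖f a‖ := norm_apply_le_of_map_mul_star_mul_self hg hg3 _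

namespace LinearEquiv

lemma norm_map_of_isSelfAdjoint (e : A ≃ₗ[ℂ] B) (he : ∀ a, e (a * a) = e a * e a)
    (he_star : ∀ a, e (star a) = star (e a)) {a : A} (ha : IsSelfAdjoint a) : ‖e a‖ = ‖a‖ := by
  have := IsAddTorsionFree.of_isTorsionFree ℂ A
  have := IsAddTorsionFree.of_isTorsionFree ℂ B
  have hea : IsSelfAdjoint (e a) := by rw [IsSelfAdjoint, ← he_star, ha.star_eq]
  have h : spectralRadius ℂ (e a) = spectralRadius ℂ a := by
    rw [spectralRadius, spectralRadius, e.spectrum_map_of_map_mul_self he]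
  rw [ha.spectralRadius_eq_nnnorm, hea.spectralRadius_eq_nnnorm] at h
  exact congrArg NNReal.toReal (ENNReal.coe_inj.1 h)

lemma norm_map_le_two_mul (e : A ≃ₗ[ℂ] B) (he : ∀ a, e (a * a) = e a * e a)
    (he_star : ∀ a, e (star a) = star (e a)) (a : A) : ‖e a‖ ≤ 2 * ‖a‖ := by
  have hsa (x : selfAdjoint A) : ‖e x‖ = ‖x‖ := e.norm_map_of_isSelfAdjoint he he_star x.2
  calc ‖e a‖ = ‖e (realPart a) + Complex.I • e (imaginaryPart a)‖ := by
        rw [← map_smul, ← map_add, realPart_add_I_smul_imaginaryPart]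
    _ ≤ ‖e (realPart a)‖ + ‖e (imaginaryPart a)‖ := (norm_add_le _ _).trans (by simp [norm_smul])
    _ ≤ 2 * ‖a‖ := by rw [hsa, hsa]; linarith [realPart.norm_le a, imaginaryPart.norm_le a]

lemma norm_map_of_map_mul_self_of_map_star (e : A ≃ₗ[ℂ] B) (he : ∀ a, e (a * a) = e a * e a)
    (he_star : ∀ a, e (star a) = star (e a)) (a : A) : ‖e a‖ = ‖a‖ :=
  have := IsAddTorsionFree.of_isTorsionFree ℂ B
  norm_apply_eq_of_map_mul_star_mul_self e.symm_apply_apply e.apply_symm_apply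
    (e.norm_map_le_two_mul he he_star)
    (e.symm.norm_map_le_two_mul (e.symm_map_mul_self he) (e.symm_map_star he_star))
    (fun x ↦ by rw [map_mul_mul_of_map_mul_self he, he_star]) a

end LinearEquiv

lemma norm_partialStar {P : B} (hP : IsStarProjection P)
    (hPc : ∀ b, P * b = b * P) (y : B) : ‖partialStar P y‖ = ‖y‖ :=
  norm_apply_eq_of_map_mul_star_mul_self (partialStar_partialStar hP hPc)
    (partialStar_partialStar hP hPc) (norm_partialStar_le P) (norm_partialStar_le P)
    (partialStar_mul_star_mul_self hP hPc) y

end CStarAlgebra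

theorem stmtN
    {A B : Type*}
    [NormedRing A] [StarRing A] [CStarRing A] [NormedAlgebra ℂ A]
    [CompleteSpace A] [StarModule ℂ A]
    [NormedRing B] [StarRing B] [CStarRing B] [NormedAlgebra ℂ B]
    [CompleteSpace B] [StarModule ℂ B]
    (u : B) (hu : u ∈ unitary B)
    (P : B) (hP : P * P = P) (hPsa : star P = P)
    (hPc : ∀ b : B, P * b = b * P)
    (J : A →ₗ[ℂ] B)
    (hJbij : Function.Bijective J)
    (hJsq : ∀ a : A, J (a * a) = J a * J a)
    (hJstar : ∀ a : A, J (star a) = star (J a))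
    (T : A → B)
    (hT : ∀ a : A, T a = u * (P * J a) + u * ((1 - P) * star (J a))) :
    Function.Surjective T ∧ Isometry T ∧
      (∀ x y : A, T (x + y) = T x + T y) ∧
      (∀ (r : ℝ) (x : A), T (r • x) = r • T x) := by
  let _ : CStarAlgebra A := {}
  let _ : CStarAlgebra B := {}
  let e := LinearEquiv.ofBijective J hJbij
  have hPproj : IsStarProjection P := ⟨hP, hPsa⟩
  have hTe (a : A) : T a = u * partialStar P (e a) := by rw [hT, partialStar, mul_add]; rfl
  have hadd (x y : A) : T (x + y) = T x + T y := by
    rw [hT, hT, hT, map_add, star_add]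
    noncomm_ring
  have hnorm (a : A) : ‖T a‖ = ‖a‖ := by
    rw [hTe, CStarRing.norm_coe_unitary_mul ⟨u, hu⟩, norm_partialStar hPproj hPc,
      e.norm_map_of_map_mul_self_of_map_star hJsq hJstar]
  refine ⟨fun b ↦ ⟨e.symm (partialStar P (star u * b)), ?_⟩, ?_, hadd, fun r x ↦ ?_⟩
  · rw [hTe, e.apply_symm_apply, partialStar_partialStar hPproj hPc, ← mul_assoc,
      Unitary.mul_star_self_of_mem hu, one_mul]
  · refine Isometry.of_dist_eq fun x y ↦ ?_
    have hsub : T (x - y) = T x - T y := eq_sub_of_add_eq (by rw [← hadd, sub_add_cancel])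
    rw [dist_eq_norm, dist_eq_norm, ← hsub, hnorm]
  · rw [hT, hT, LinearMap.map_smul_of_tower, star_smul, star_trivial, mul_smul_comm, mul_smul_comm,
      mul_smul_comm, mul_smul_comm, smul_add]
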